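/- With K = n_r - r + 1 and M_r = C(r+K-2, r-1), if ‖h‖_{ℓ¹} < 1 + ε then every block of G_N satisfies ‖(G_N)_{i,j}‖ ≤ (2+ε)M_r for 0 < i-j < K, and consequently sup_{N} ‖G_N‖ ≤ (2+ε) M_r K < ∞. -/

import Mathlib

/-!
The coefficient of block `(i, j)` is a difference of binomial coefficients `C(r+m-2, r-1)`,
`m ≤ K`, each bounded by the largest one `M_r`; weighting the sum by `h` costs a factor
`‖h‖_{ℓ¹} < 1 + ε`, and the projection chain is a contraction, so every block has norm at most
`(2 + ε) M_r`. Since `G_N` is banded of width `K`, every block row and every block column has at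
most `K` nonzero blocks, and Cauchy–Schwarz on the rows followed by exchanging the order of
summation gives `‖G_N v‖ ≤ (2 + ε) M_r K ‖v‖`.
-/

noncomputable section

/-- The orthogonal projection onto `W`, as a continuous endomorphism of the ambient space. -/
def projCLM {d : ℕ} (W : Submodule ℝ (EuclideanSpace ℝ (Fin d))) :
    EuclideanSpace ℝ (Fin d) →L[ℝ] EuclideanSpace ℝ (Fin d) :=
  W.subtypeL.comp (Submodule.orthogonalProjection W)

/-- The composition `P_{W_i} P_{W_{i-1}} ⋯ P_{W_{j+1}}` (equal to `1` when `i ≤ j`). -/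
def projChainCLM {d : ℕ} (W : ℕ → Submodule ℝ (EuclideanSpace ℝ (Fin d))) (i j : ℕ) :
    EuclideanSpace ℝ (Fin d) →L[ℝ] EuclideanSpace ℝ (Fin d) :=
  (((List.range (i - j)).map fun t => projCLM (W (i - t)))).prod

open Finset

section Contraction

variable {𝕜 E : Type*} [NontriviallyNormedField 𝕜] [SeminormedAddCommGroup E] [NormedSpace 𝕜 E]

theorem ContinuousLinearMap.norm_list_prod_le_one (l : List (E →L[𝕜] E))
    (hl : ∀ A ∈ l, ‖A‖ ≤ 1) : ‖l.prod‖ ≤ 1 := by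
  induction l with
  | nil => exact ContinuousLinearMap.norm_id_le
  | cons A l ih =>
    rw [List.prod_cons]
    calc ‖A * l.prod‖ ≤ ‖A‖ * ‖l.prod‖ := norm_mul_le _ _
      _ ≤ 1 * 1 := by
        gcongr
        exacts [hl A List.mem_cons_self, ih fun B hB => hl B (List.mem_cons_of_mem A hB)]
      _ = 1 := one_mul 1

end Contraction

theorem norm_projCLM_le {d : ℕ} (W : Submodule ℝ (EuclideanSpace ℝ (Fin d))) :
    ‖projCLM W‖ ≤ 1 :=
  ContinuousLinearMap.opNorm_le_bound _ zero_le_one fun x => by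
    calc ‖projCLM W x‖ = ‖W.orthogonalProjectionOnto x‖ := rfl
      _ ≤ ‖W.orthogonalProjectionOnto‖ * ‖x‖ := W.orthogonalProjectionOnto.le_opNorm x
      _ ≤ 1 * ‖x‖ := by gcongr; exact W.orthogonalProjectionOnto_norm_le

theorem norm_projChainCLM_le {d : ℕ} (W : ℕ → Submodule ℝ (EuclideanSpace ℝ (Fin d)))
    (i j : ℕ) : ‖projChainCLM W i j‖ ≤ 1 := by
  refine ContinuousLinearMap.norm_list_prod_le_one _ fun A hA => ?_
  obtain ⟨t, -, rfl⟩ := List.mem_map.mp hA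
  exact norm_projCLM_le _

theorem abs_choose_sub_sum_choose_mul_le (r K i j : ℕ) (h : ℕ → ℝ) (hij : i - j < K) :
    |((r + i - j - 1).choose (r - 1) : ℝ) -
        ∑ l ∈ Icc 1 (i - j), ((r + i - j - l - 1).choose (r - 1) : ℝ) * h l| ≤
      ((r + K - 2).choose (r - 1) : ℝ) * (1 + ∑ l ∈ Icc 1 (i - j), |h l|) := by
  set M : ℝ := ((r + K - 2).choose (r - 1) : ℝ)
  have choose_le_M : ∀ n ≤ r + K - 2, (n.choose (r - 1) : ℝ) ≤ M := fun n hn =>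
    Nat.cast_le.mpr (Nat.choose_le_choose _ hn)
  have sum_le : |∑ l ∈ Icc 1 (i - j), ((r + i - j - l - 1).choose (r - 1) : ℝ) * h l| ≤
      M * ∑ l ∈ Icc 1 (i - j), |h l| := by
    rw [mul_sum]
    refine (abs_sum_le_sum_abs _ _).trans (sum_le_sum fun l hl => ?_)
    rw [abs_mul, Nat.abs_cast]
    have hl := (mem_Icc.mp hl).1
    exact mul_le_mul_of_nonneg_right (choose_le_M _ (by omega)) (abs_nonneg _)
  calc _ ≤ |((r + i - j - 1).choose (r - 1) : ℝ)| +
        |∑ l ∈ Icc 1 (i - j), ((r + i - j - l - 1).choose (r - 1) : ℝ) * h l| := abs_sub _ _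
    _ ≤ M + M * ∑ l ∈ Icc 1 (i - j), |h l| := by
      rw [Nat.abs_cast]
      exact add_le_add (choose_le_M _ (by omega)) sum_le
    _ = _ := by ring

theorem card_filter_band_row_le (N K i : ℕ) :
    #{j : Fin N | (j : ℕ) ≤ i ∧ i - j < K} ≤ K :=
  calc _ ≤ #(Ico (i + 1 - K) (i + 1)) :=
        card_le_card_of_injOn Fin.val (fun j hj => by simp at hj ⊢; omega)
          Fin.val_injective.injOn
    _ ≤ K := by simp only [Nat.card_Ico]; omega

theorem card_filter_band_col_le (N K j : ℕ) :
    #{i : Fin N | j ≤ (i : ℕ) ∧ i - j < K} ≤ K :=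
  calc _ ≤ #(Ico j (j + K)) :=
        card_le_card_of_injOn Fin.val (fun i hi => by simp at hi ⊢; omega)
          Fin.val_injective.injOn
    _ = K := by simp

open Classical in
theorem sum_norm_sum_apply_sq_le_of_sparse {ι 𝕜 E F : Type*} [Fintype ι]
    [NontriviallyNormedField 𝕜] [SeminormedAddCommGroup E] [NormedSpace 𝕜 E]
    [SeminormedAddCommGroup F] [NormedSpace 𝕜 F]
    (G : ι → ι → E →L[𝕜] F) (C : ℝ) (K : ℕ) (hC : ∀ i j, ‖G i j‖ ≤ C)
    (hrow : ∀ i, #{j | G i j ≠ 0} ≤ K) (hcol : ∀ j, #{i | G i j ≠ 0} ≤ K) (v : ι → E) :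
    ∑ i, ‖∑ j, G i j (v j)‖ ^ 2 ≤ (C * K) ^ 2 * ∑ j, ‖v j‖ ^ 2 := by
  have row_le : ∀ i, ‖∑ j, G i j (v j)‖ ^ 2 ≤ C ^ 2 * K * ∑ j with G i j ≠ 0, ‖v j‖ ^ 2 := by
    intro i
    have hsupp : ∑ j with G i j ≠ 0, G i j (v j) = ∑ j, G i j (v j) :=
      sum_filter_of_ne fun j _ hj hG => hj (by simp [hG])
    have hnorm : ‖∑ j, G i j (v j)‖ ≤ C * ∑ j with G i j ≠ 0, ‖v j‖ := by
      rw [← hsupp, mul_sum]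
      exact (norm_sum_le _ _).trans <| sum_le_sum fun j _ =>
        (G i j).le_of_opNorm_le (hC i j) (v j)
    calc _ ≤ (C * ∑ j with G i j ≠ 0, ‖v j‖) ^ 2 := pow_le_pow_left₀ (norm_nonneg _) hnorm 2
      _ = C ^ 2 * (∑ j with G i j ≠ 0, ‖v j‖) ^ 2 := by ring
      _ ≤ C ^ 2 * (#{j | G i j ≠ 0} * ∑ j with G i j ≠ 0, ‖v j‖ ^ 2) := by
        gcongr; exact sq_sum_le_card_mul_sum_sq
      _ ≤ C ^ 2 * K * ∑ j with G i j ≠ 0, ‖v j‖ ^ 2 := by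
        rw [← mul_assoc]; gcongr; exact_mod_cast hrow i
  have swap : ∑ i, ∑ j with G i j ≠ 0, ‖v j‖ ^ 2 = ∑ j, #{i | G i j ≠ 0} • ‖v j‖ ^ 2 := by
    rw [sum_comm' (t' := univ) (s' := fun j => {i | G i j ≠ 0}) (by simp)]
    simp only [sum_const]
  calc _ ≤ ∑ i, C ^ 2 * K * ∑ j with G i j ≠ 0, ‖v j‖ ^ 2 := sum_le_sum fun i _ => row_le i
    _ = C ^ 2 * K * ∑ j, #{i | G i j ≠ 0} • ‖v j‖ ^ 2 := by rw [← mul_sum, swap]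
    _ ≤ C ^ 2 * K * ∑ j, K * ‖v j‖ ^ 2 := by
      gcongr with j; rw [nsmul_eq_mul]; gcongr; exact_mod_cast hcol j
    _ = _ := by rw [← mul_sum]; ring

theorem stmt_15_general (d N r : ℕ) (nn : ℕ → ℕ) (ε : ℝ)
    (h : ℕ → ℝ) (hh : ∀ n : ℕ, ∑ l ∈ Finset.Icc 1 n, |h l| < 1 + ε)
    (W : ℕ → Submodule ℝ (EuclideanSpace ℝ (Fin d)))
    (G : Fin N → Fin N → EuclideanSpace ℝ (Fin d) →L[ℝ] EuclideanSpace ℝ (Fin d))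
    (hG : ∀ i j : Fin N, G i j =
      if i = j then 1
      else if (j : ℕ) < (i : ℕ) ∧ (i : ℕ) - (j : ℕ) < nn r - r + 1 then
        ((Nat.choose (r + (i : ℕ) - (j : ℕ) - 1) (r - 1) : ℝ) -
          ∑ l ∈ Finset.Icc 1 ((i : ℕ) - (j : ℕ)),
            (Nat.choose (r + (i : ℕ) - (j : ℕ) - l - 1) (r - 1) : ℝ) * h l) •
          projChainCLM W (i : ℕ) (j : ℕ)
      else 0) :
    (∀ i j : Fin N, (j : ℕ) < (i : ℕ) → (i : ℕ) - (j : ℕ) < nn r - r + 1 →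
      ‖G i j‖ ≤ (2 + ε) * (Nat.choose (r + (nn r - r + 1) - 2) (r - 1) : ℝ)) ∧
    (∀ v : Fin N → EuclideanSpace ℝ (Fin d),
      Real.sqrt (∑ i, ‖∑ j, G i j (v j)‖ ^ 2) ≤
        (2 + ε) * (Nat.choose (r + (nn r - r + 1) - 2) (r - 1) : ℝ) * (nn r - r + 1 : ℕ) *
          Real.sqrt (∑ i, ‖v i‖ ^ 2)) := by
  set K := nn r - r + 1
  set M : ℝ := ((r + K - 2).choose (r - 1) : ℝ)
  have hM : 1 ≤ M := Nat.one_le_cast.mpr (Nat.choose_pos (by omega))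
  have hC : 1 ≤ (2 + ε) * M := by
    have : 0 < 1 + ε := by simpa using hh 0
    nlinarith
  have block_le : ∀ i j, ‖G i j‖ ≤ (2 + ε) * M := by
    intro i j
    rw [hG i j]
    split_ifs with hdiag hband
    · exact ContinuousLinearMap.norm_id_le.trans hC
    · refine (ContinuousLinearMap.opNorm_smul_le _ _).trans ?_
      rw [Real.norm_eq_abs]
      refine (mul_le_of_le_one_right (abs_nonneg _) (norm_projChainCLM_le W _ _)).trans ?_
      refine (abs_choose_sub_sum_choose_mul_le r K i j h hband.2).trans ?_
      nlinarith [hh (i - j)]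
    · rw [norm_zero]; linarith
  have support : ∀ i j, G i j ≠ 0 → (j : ℕ) ≤ i ∧ (i : ℕ) - j < K := by
    intro i j hij
    by_contra hout
    apply hij
    rw [hG i j, if_neg (by rintro rfl; omega), if_neg (by omega)]
  refine ⟨fun i j _ _ => block_le i j, fun v => ?_⟩
  have hsq := sum_norm_sum_apply_sq_le_of_sparse G _ K block_le
    (fun i => (card_le_card fun j hj => by simpa using support i j (by simpa using hj)).trans
      (card_filter_band_row_le N K i))
    (fun j => (card_le_card fun i hi => by simpa using support i j (by simpa using hi)).trans
      (card_filter_band_col_le N K j)) v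
  calc _ ≤ √(((2 + ε) * M * K) ^ 2 * ∑ j, ‖v j‖ ^ 2) := Real.sqrt_le_sqrt hsq
    _ = _ := by
      rw [Real.sqrt_mul (sq_nonneg _),
        Real.sqrt_sq (mul_nonneg (zero_le_one.trans hC) K.cast_nonneg)]

/-- With `K = n_r - r + 1` and `M_r = C(r+K-2, r-1)`, if `‖h‖_{ℓ¹} < 1 + ε` then every
off-diagonal block of `G_N` has norm at most `(2+ε)M_r`, and `‖G_N‖ ≤ (2+ε)·M_r·K`. -/
theorem stmt_15 (d N r σ : ℕ) (hr : 1 ≤ r) (hσ : 1 ≤ σ) (hN : 1 ≤ N)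
    (nn : ℕ → ℕ) (hnn : ∀ j, nn j = σ * (j - 1) ^ 2 + 1)
    (ε : ℝ) (hε : 0 < ε)
    (h : ℕ → ℝ) (hh : ∀ n : ℕ, ∑ l ∈ Finset.Icc 1 n, |h l| < 1 + ε)
    (W : ℕ → Submodule ℝ (EuclideanSpace ℝ (Fin d)))
    (G : Fin N → Fin N → EuclideanSpace ℝ (Fin d) →L[ℝ] EuclideanSpace ℝ (Fin d))
    (hG : ∀ i j : Fin N, G i j =
      if i = j then 1
      else if (j : ℕ) < (i : ℕ) ∧ (i : ℕ) - (j : ℕ) < nn r - r + 1 then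
        ((Nat.choose (r + (i : ℕ) - (j : ℕ) - 1) (r - 1) : ℝ) -
          ∑ l ∈ Finset.Icc 1 ((i : ℕ) - (j : ℕ)),
            (Nat.choose (r + (i : ℕ) - (j : ℕ) - l - 1) (r - 1) : ℝ) * h l) •
          projChainCLM W (i : ℕ) (j : ℕ)
      else 0) :
    (∀ i j : Fin N, (j : ℕ) < (i : ℕ) → (i : ℕ) - (j : ℕ) < nn r - r + 1 →
      ‖G i j‖ ≤ (2 + ε) * (Nat.choose (r + (nn r - r + 1) - 2) (r - 1) : ℝ)) ∧
    (∀ v : Fin N → EuclideanSpace ℝ (Fin d),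
      Real.sqrt (∑ i, ‖∑ j, G i j (v j)‖ ^ 2) ≤
        (2 + ε) * (Nat.choose (r + (nn r - r + 1) - 2) (r - 1) : ℝ) * (nn r - r + 1 : ℕ) *
          Real.sqrt (∑ i, ‖v i‖ ^ 2)) :=
  stmt_15_general d N r nn ε h hh W G hG
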